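/- Let I ⊆ K[x₁,...,x_n] be an ideal primary to m = (x₁,...,x_n) with K a field. If Ĩ ∩ (I : m) ⊆ I, then I is Ratliff-Rush (I = Ĩ). -/

import Mathlib

/-- The Ratliff-Rush closure of an ideal, as a set: `∪_{m≥1} (I^{m+1} : I^m)`. -/
def ratliffRushClosure {R : Type*} [CommRing R] (I : Ideal R) : Set R :=
  {x | ∃ m : ℕ, 1 ≤ m ∧ x ∈ (I ^ (m + 1)).colon ((I ^ m : Ideal R) : Set R)}

theorem ratliffRush_of_socle_condition (K : Type*) [Field K] (n : ℕ)
    (I : Ideal (MvPolynomial (Fin n) K))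
    (m : Ideal (MvPolynomial (Fin n) K))
    (hm : m = Ideal.span (Set.range (MvPolynomial.X : Fin n → MvPolynomial (Fin n) K)))
    (hprimary : ∃ N : ℕ, m ^ N ≤ I)
    (hsocle : ratliffRushClosure I ∩ (I.colon m : Set (MvPolynomial (Fin n) K)) ⊆ I) :
    (I : Set (MvPolynomial (Fin n) K)) = ratliffRushClosure I := by
  obtain ⟨N, hN⟩ := hprimary
  apply Set.Subset.antisymm
  · intro x hx
    refine ⟨1, le_refl 1, ?_⟩
    rw [Submodule.mem_colon]
    intro p hp
    rw [pow_one] at hp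
    have : (1:ℕ) + 1 = 2 := rfl
    rw [this, sq]
    exact Ideal.mul_mem_mul hx hp
  · rintro x ⟨k, hk, hx⟩
    have hIk : I ^ (k + 1) ≤ I := Ideal.pow_le_self (Nat.succ_ne_zero k)
    have key : ∀ j : ℕ, x ∈ I.colon ((m ^ j : Ideal (MvPolynomial (Fin n) K)) : Set (MvPolynomial (Fin n) K)) → x ∈ I := by
      intro j
      induction j with
      | zero =>
        intro h
        have := Submodule.mem_colon.mp h 1 (by simp)
        simpa using this
      | succ j ih =>
        intro h
        apply ih
        rw [Submodule.mem_colon] at h ⊢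
        intro y hy
        have hxy : x * y ∈ I := by
          apply hsocle
          constructor
          · refine ⟨k, hk, ?_⟩
            rw [Submodule.mem_colon] at hx ⊢
            intro p hp
            have h1 : x * p ∈ I ^ (k + 1) := hx p hp
            rw [smul_eq_mul, mul_comm x y, mul_assoc]
            exact Ideal.mul_mem_left _ y h1
          · rw [SetLike.mem_coe, Submodule.mem_colon]
            intro z hz
            have hmem : y * z ∈ m ^ (j + 1) := by
              rw [pow_succ]
              exact Ideal.mul_mem_mul hy hz
            have := h (y * z) hmem
            simpa [smul_eq_mul, mul_assoc] using this
        simpa [smul_eq_mul] using hxy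
    apply key (N * k)
    rw [Submodule.mem_colon]
    intro y hy
    have h1 : m ^ (N * k) ≤ I ^ k := by
      rw [pow_mul]
      exact Ideal.pow_right_mono hN k
    have := Submodule.mem_colon.mp hx y (h1 hy)
    exact hIk this
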